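/- arXiv:math-ph/0512003 — 2 statements merged into one kernel-verified Lean document; each statement's English description precedes it below -/
import Mathlib

section
/- Let V be a finite-dimensional real vector space, ω a nondegenerate skew-symmetric bilinear form, K ≤ V with dim K + dim ω^{-1}(A) = dim V and V = K ⊕ F where F = ω^{-1}(A) for a subspace A ≤ V*. Let P : V → K and Q : V → F be the projectors. Given γ ∈ V and ε ∈ V* such that ω(P γ, ·) − ε = −ω(Q γ, ·) ∈ A, the element P γ is the unique x ∈ K with ω(x,·) − ε ∈ A. -/
theorem stmt13 {V : Type*} [AddCommGroup V] [Module ℝ V] [FiniteDimensional ℝ V]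
    (ω : V →ₗ[ℝ] Module.Dual ℝ V)
    (hskew : ∀ v w : V, ω v w = - ω w v)
    (hnd : ∀ v : V, (∀ w : V, ω v w = 0) → v = 0)
    (A : Submodule ℝ (Module.Dual ℝ V)) (K : Submodule ℝ V)
    (hdim : Module.finrank ℝ K + Module.finrank ℝ (Submodule.comap ω A) =
      Module.finrank ℝ V)
    (hcompl : IsCompl K (Submodule.comap ω A))
    (P : V →ₗ[ℝ] V)
    (hP : ∀ v : V, P v ∈ K ∧ v - P v ∈ Submodule.comap ω A)
    (γ : V) (ε : Module.Dual ℝ V) (hγ : ω γ = ε) :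
    (P γ ∈ K ∧ ω (P γ) - ε ∈ A) ∧
      ∀ x' : V, x' ∈ K → ω x' - ε ∈ A → x' = P γ := by
  obtain ⟨hPK, hPF⟩ := hP γ
  have hmem : ω (P γ) - ε ∈ A := by
    have h : ω (γ - P γ) ∈ A := hPF
    have : ω (P γ) - ε = -(ω (γ - P γ)) := by
      rw [← hγ, map_sub]; abel
    rw [this]
    exact A.neg_mem h
  refine ⟨⟨hPK, hmem⟩, fun x' hx'K hx'A => ?_⟩
  have hdiff : x' - P γ ∈ K ⊓ Submodule.comap ω A := by
    refine ⟨K.sub_mem hx'K hPK, ?_⟩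
    have : ω (x' - P γ) = (ω x' - ε) - (ω (P γ) - ε) := by
      rw [map_sub]; abel
    show ω (x' - P γ) ∈ A
    rw [this]
    exact A.sub_mem hx'A hmem
  have := hcompl.inf_eq_bot ▸ hdiff
  rw [Submodule.mem_bot] at this
  exact sub_eq_zero.mp this
end

section
/- Let E, E' be finite-dimensional real vector spaces, Φ : E → E' a surjective linear map, and G, G' symmetric bilinear forms on E, E' respectively with G(b,c) = G'(Φb, Φc) for all b,c. Let D ≤ E be a subspace with Φ(D) = D'. If the restriction of G to D × D has zero kernel, then the restriction of G' to D' × D' has zero kernel. -/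
theorem stmt15 {E E' : Type*} [AddCommGroup E] [Module ℝ E] [FiniteDimensional ℝ E]
    [AddCommGroup E'] [Module ℝ E'] [FiniteDimensional ℝ E']
    (Φ : E →ₗ[ℝ] E') (hsurj : Function.Surjective Φ)
    (G : E →ₗ[ℝ] E →ₗ[ℝ] ℝ) (G' : E' →ₗ[ℝ] E' →ₗ[ℝ] ℝ)
    (hGsym : ∀ x y : E, G x y = G y x)
    (hG'sym : ∀ x y : E', G' x y = G' y x)
    (hrel : ∀ b c : E, G b c = G' (Φ b) (Φ c))
    (D : Submodule ℝ E) (D' : Submodule ℝ E') (hD' : D.map Φ = D')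
    (hker : ∀ b ∈ D, (∀ c ∈ D, G b c = 0) → b = 0) :
    ∀ b' ∈ D', (∀ c' ∈ D', G' b' c' = 0) → b' = 0 := by
  intro b' hb' h
  rw [← hD'] at hb'
  obtain ⟨b, hb, rfl⟩ := hb'
  have : b = 0 := hker b hb (fun c hc => by
    rw [hrel]; exact h _ (hD' ▸ Submodule.mem_map_of_mem hc))
  simp [this]
end
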